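/- arXiv:1002.2082 — 3 statements merged into one kernel-verified Lean document; each statement's English description precedes it below -/
import Mathlib

section
/- Let n ≥ 1, σ > 0, and define H(c) = (1 + √(1 + 4n/(c²σ)))^{n/4}·exp((σ/16)(c² + c√(c² + 4n/σ)))·e^{−n/8} for c > 0. Then H'(c) = 0 if and only if (σ²/16)·c·√(c² + 4n/σ)·(c + √(c² + 4n/σ))·(2c + √(c² + 4n/σ) + c²/√(c² + 4n/σ)) = n². -/
open Real

/-!
For `c > 0` we have `1 + √(1 + a / c²) = (c + √(c² + a)) / c` with `a = 4n/σ`, so `H = exp ∘ ψ`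
where `ψ` is built from `log (c + √(c² + a))`, `log c` and `c² + c √(c² + a)`, and the first of
these has the simple derivative `1 / √(c² + a)`. Hence `H' = H · ψ'` with `H > 0`, and clearing the
positive denominator `c s (c + s)`, `s = √(c² + a)`, in `ψ' = 0` gives the criterion since
`(c - s)(c + s) = -a`.
-/

theorem one_add_sqrt_one_add_div_sq {a x : ℝ} (ha : 0 ≤ a) (hx : 0 < x) :
    1 + √(1 + a / x ^ 2) = (x + √(x ^ 2 + a)) / x := by
  have h : 1 + a / x ^ 2 = (x ^ 2 + a) / x ^ 2 := by field_simp
  rw [h, sqrt_div (by positivity), sqrt_sq hx.le]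
  field_simp

theorem hasDerivAt_log_add_sqrt_sq_add {a x : ℝ} (ha : 0 ≤ a) (hx : 0 < x) :
    HasDerivAt (fun y => log (y + √(y ^ 2 + a))) (√(x ^ 2 + a))⁻¹ x := by
  have hq : 0 < x ^ 2 + a := by positivity
  have hs : 0 < √(x ^ 2 + a) := sqrt_pos.mpr hq
  have hsq := ((hasDerivAt_pow 2 x).add_const a).sqrt hq.ne'
  have hlog := ((hasDerivAt_id' x).fun_add hsq).log (by positivity)
  convert hlog using 1
  field_simp
  ring

theorem hasDerivAt_sq_add_mul_sqrt_sq_add {a x : ℝ} (h : 0 < x ^ 2 + a) :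
    HasDerivAt (fun y => y ^ 2 + y * √(y ^ 2 + a))
      (2 * x + √(x ^ 2 + a) + x ^ 2 / √(x ^ 2 + a)) x := by
  have hs : 0 < √(x ^ 2 + a) := sqrt_pos.mpr h
  have hsq := ((hasDerivAt_pow 2 x).add_const a).sqrt h.ne'
  refine ((hasDerivAt_pow 2 x).fun_add ((hasDerivAt_id' x).fun_mul hsq)).congr_deriv ?_
  push_cast
  field_simp
  ring

noncomputable def imqMN (a k b x : ℝ) : ℝ :=
  (1 + √(1 + a / x ^ 2)) ^ k * exp (b * (x ^ 2 + x * √(x ^ 2 + a)))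

theorem imqMN_pos (a k b x : ℝ) : 0 < imqMN a k b x := by
  unfold imqMN
  positivity

theorem imqMN_eq_exp {a k b x : ℝ} (ha : 0 ≤ a) (hx : 0 < x) :
    imqMN a k b x =
      exp (k * (log (x + √(x ^ 2 + a)) - log x) + b * (x ^ 2 + x * √(x ^ 2 + a))) := by
  have hbase : 0 < x + √(x ^ 2 + a) := by positivity
  rw [imqMN, one_add_sqrt_one_add_div_sq ha hx, rpow_def_of_pos (by positivity),
    log_div hbase.ne' hx.ne', exp_add, mul_comm k]

theorem hasDerivAt_imqMN {a k b x : ℝ} (ha : 0 ≤ a) (hx : 0 < x) :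
    HasDerivAt (imqMN a k b)
      (imqMN a k b x * (k * ((√(x ^ 2 + a))⁻¹ - x⁻¹) +
        b * (2 * x + √(x ^ 2 + a) + x ^ 2 / √(x ^ 2 + a)))) x := by
  have hexp : imqMN a k b =ᶠ[nhds x] fun y =>
      exp (k * (log (y + √(y ^ 2 + a)) - log y) + b * (y ^ 2 + y * √(y ^ 2 + a))) := by
    filter_upwards [eventually_gt_nhds hx] with y hy using imqMN_eq_exp ha hy
  have hlog := ((hasDerivAt_log_add_sqrt_sq_add ha hx).sub (hasDerivAt_log hx.ne')).const_mul k
  have hq : 0 < x ^ 2 + a := by positivity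
  have hpoly := (hasDerivAt_sq_add_mul_sqrt_sq_add hq).const_mul b
  rw [hexp.eq_of_nhds]
  exact (hlog.add hpoly).exp.congr_of_eventuallyEq hexp

theorem imqMN_logDeriv_eq_zero_iff {a k b c : ℝ} (ha : 0 ≤ a) (hc : 0 < c) :
    k * ((√(c ^ 2 + a))⁻¹ - c⁻¹) + b * (2 * c + √(c ^ 2 + a) + c ^ 2 / √(c ^ 2 + a)) = 0 ↔
      b * c * √(c ^ 2 + a) * (c + √(c ^ 2 + a)) *
        (2 * c + √(c ^ 2 + a) + c ^ 2 / √(c ^ 2 + a)) = k * a := by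
  set s := √(c ^ 2 + a)
  have hs : 0 < s := by positivity
  have hs2 : s ^ 2 = c ^ 2 + a := sq_sqrt (by positivity)
  -- multiplying by `c s (c + s)` turns `s⁻¹ - c⁻¹` into `c ^ 2 - s ^ 2 = -a`
  have hscale : (k * (s⁻¹ - c⁻¹) + b * (2 * c + s + c ^ 2 / s)) * (c * s * (c + s)) =
      b * c * s * (c + s) * (2 * c + s + c ^ 2 / s) - k * a := by
    field_simp
    linear_combination (-k) * hs2
  rw [← sub_eq_zero (b := k * a), ← hscale, mul_eq_zero, or_iff_left (by positivity)]

theorem stmt_8_general (n : ℕ) (σ : ℝ) (hσ : 0 < σ)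
    (H : ℝ → ℝ)
    (hH : ∀ c : ℝ, H c =
      (1 + Real.sqrt (1 + 4 * n / (c ^ 2 * σ))) ^ ((n : ℝ) / 4) *
        Real.exp (σ / 16 * (c ^ 2 + c * Real.sqrt (c ^ 2 + 4 * n / σ))) *
        Real.exp (-(n : ℝ) / 8)) :
    ∀ c : ℝ, 0 < c →
      (deriv H c = 0 ↔
        σ ^ 2 / 16 * c * Real.sqrt (c ^ 2 + 4 * n / σ) *
          (c + Real.sqrt (c ^ 2 + 4 * n / σ)) *
          (2 * c + Real.sqrt (c ^ 2 + 4 * n / σ) + c ^ 2 / Real.sqrt (c ^ 2 + 4 * n / σ)) =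
          (n : ℝ) ^ 2) := by
  intro c hc
  have ha : 0 ≤ 4 * (n : ℝ) / σ := by positivity
  have hH' : H = fun x => imqMN (4 * n / σ) (n / 4) (σ / 16) x * exp (-(n : ℝ) / 8) := by
    funext x
    rw [hH, imqMN, div_div, mul_comm σ]
  rw [hH', ((hasDerivAt_imqMN ha hc).mul_const _).deriv, mul_eq_zero,
    or_iff_left (exp_ne_zero _), mul_eq_zero, or_iff_right (imqMN_pos _ _ _ _).ne',
    imqMN_logDeriv_eq_zero_iff ha hc]
  constructor <;> intro h <;> field_simp at h ⊢ <;> linarith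

theorem stmt_8 (n : ℕ) (hn : 1 ≤ n) (σ : ℝ) (hσ : 0 < σ)
    (H : ℝ → ℝ)
    (hH : ∀ c : ℝ, H c =
      (1 + Real.sqrt (1 + 4 * n / (c ^ 2 * σ))) ^ ((n : ℝ) / 4) *
        Real.exp (σ / 16 * (c ^ 2 + c * Real.sqrt (c ^ 2 + 4 * n / σ))) *
        Real.exp (-(n : ℝ) / 8)) :
    ∀ c : ℝ, 0 < c →
      (deriv H c = 0 ↔
        σ ^ 2 / 16 * c * Real.sqrt (c ^ 2 + 4 * n / σ) *
          (c + Real.sqrt (c ^ 2 + 4 * n / σ)) *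
          (2 * c + Real.sqrt (c ^ 2 + 4 * n / σ) + c ^ 2 / Real.sqrt (c ^ 2 + 4 * n / σ)) =
          (n : ℝ) ^ 2) :=
  stmt_8_general n σ hσ H hH
end

section
/- Let n ≥ 1, σ > 0. The MN function H(c) = (1 + √(1 + 4n/(c²σ)))^{n/4}·exp((σ/16)(c² + c√(c² + 4n/σ)))·e^{−n/8} attains a unique global minimum on (0, ∞). -/
/-!
With `s = √(1 + 4n/(c²σ))` one has `c² + c√(c² + 4n/σ) = (4n/σ)/(s - 1)`, so
`H c = exp ((n/4) (log (1 + s) + 1/(s - 1)) - n/8)`. As `c` runs over `(0, ∞)`, `s` runs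
injectively through `(1, ∞)`, and `log (1 + s) + 1/(s - 1)` has a strict global minimum at
`s = 3`, i.e. at `c = √(n/(2σ))`.
-/

open Real

noncomputable def mnExponent (s : ℝ) : ℝ := log (1 + s) + (s - 1)⁻¹

/- `log x < x - 1` at `x = 4 / (1 + s)` reduces the claim to `0 ≤ (s - 3) ^ 2`. -/
lemma mnExponent_three_lt {s : ℝ} (hs : 1 < s) (h3 : s ≠ 3) : mnExponent 3 < mnExponent s := by
  have hlog : log 4 - log (1 + s) < 4 / (1 + s) - 1 := by
    rw [← log_div (by norm_num) (by linarith)]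
    refine log_lt_sub_one_of_pos (by positivity) fun h => h3 ?_
    rw [div_eq_one_iff_eq (by linarith)] at h
    linarith
  have hquad : 4 / (1 + s) - 1 ≤ (s - 1)⁻¹ - 2⁻¹ := by
    have h1 : 0 < s - 1 := by linarith
    rw [div_sub_one (by linarith), ← sub_nonneg]
    field_simp
    nlinarith [sq_nonneg (s - 3)]
  unfold mnExponent
  norm_num
  linarith

section
variable {a c : ℝ}

lemma one_lt_sqrt_one_add_div_sq (ha : 0 < a) (hc : c ≠ 0) : 1 < √(1 + a / c ^ 2) := by
  rw [lt_sqrt zero_le_one]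
  have : 0 < a / c ^ 2 := by positivity
  linarith

lemma sq_add_mul_sqrt_sq_add (ha : 0 < a) (hc : 0 < c) :
    c ^ 2 + c * √(c ^ 2 + a) = a / (√(1 + a / c ^ 2) - 1) := by
  have hs := one_lt_sqrt_one_add_div_sq ha hc.ne'
  have hsq : √(1 + a / c ^ 2) ^ 2 = 1 + a / c ^ 2 := sq_sqrt (by positivity)
  have hfactor : √(c ^ 2 + a) = c * √(1 + a / c ^ 2) := by
    rw [← sqrt_sq hc.le, ← sqrt_mul (sq_nonneg c), sqrt_sq hc.le]
    field_simp
  rw [hfactor, eq_div_iff (by linarith)]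
  field_simp at hsq ⊢
  linear_combination hsq

lemma sqrt_one_add_div_sq_eq_three_iff (ha : 0 ≤ a) (hc : 0 < c) :
    √(1 + a / c ^ 2) = 3 ↔ c = √(a / 8) := by
  rw [sqrt_eq_iff_eq_sq (by positivity) (by norm_num), eq_comm (a := c),
    sqrt_eq_iff_eq_sq (by positivity) hc.le]
  constructor <;> intro h <;> field_simp at h ⊢ <;> linarith
end

lemma mn_eq_exp_mnExponent {n σ c : ℝ} (hn : 0 < n) (hσ : 0 < σ) (hc : 0 < c) :
    (1 + √(1 + 4 * n / (c ^ 2 * σ))) ^ (n / 4) *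
        exp (σ / 16 * (c ^ 2 + c * √(c ^ 2 + 4 * n / σ))) * exp (-n / 8) =
      exp (n / 4 * mnExponent √(1 + 4 * n / σ / c ^ 2) - n / 8) := by
  have ha : 0 < 4 * n / σ := by positivity
  have hs := one_lt_sqrt_one_add_div_sq ha hc.ne'
  rw [sq_add_mul_sqrt_sq_add ha hc, mul_comm (c ^ 2), ← div_div,
    rpow_def_of_pos (by linarith), ← exp_add, ← exp_add, mnExponent]
  congr 1
  field_simp
  ring

theorem stmt_9 (n : ℕ) (hn : 1 ≤ n) (σ : ℝ) (hσ : 0 < σ)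
    (H : ℝ → ℝ)
    (hH : ∀ c : ℝ, H c =
      (1 + Real.sqrt (1 + 4 * n / (c ^ 2 * σ))) ^ ((n : ℝ) / 4) *
        Real.exp (σ / 16 * (c ^ 2 + c * Real.sqrt (c ^ 2 + 4 * n / σ))) *
        Real.exp (-(n : ℝ) / 8)) :
    ∃! c : ℝ, 0 < c ∧ ∀ x : ℝ, 0 < x → H c ≤ H x := by
  have hn : (0 : ℝ) < n := by exact_mod_cast hn
  set a := 4 * (n : ℝ) / σ
  have ha : 0 < a := by positivity
  set c₀ := √(a / 8)
  have hc₀ : 0 < c₀ := sqrt_pos.2 (by positivity)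
  have hlt : ∀ x, 0 < x → x ≠ c₀ → H c₀ < H x := by
    intro x hx hne
    rw [hH, hH, mn_eq_exp_mnExponent hn hσ hc₀, mn_eq_exp_mnExponent hn hσ hx,
      (sqrt_one_add_div_sq_eq_three_iff ha.le hc₀).2 rfl, exp_lt_exp, sub_lt_sub_iff_right]
    refine mul_lt_mul_of_pos_left (mnExponent_three_lt (one_lt_sqrt_one_add_div_sq ha hx.ne') ?_)
      (by positivity)
    exact hne ∘ (sqrt_one_add_div_sq_eq_three_iff ha.le hx).1
  refine ⟨c₀, ⟨hc₀, fun x hx => ?_⟩, fun y ⟨hy, hmin⟩ => ?_⟩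
  · rcases eq_or_ne x c₀ with rfl | hne
    · exact le_rfl
    · exact (hlt x hx hne).le
  · by_contra hne
    exact (hlt y hy hne).not_ge (hmin c₀ hc₀)
end

section
/- Let σ > 0, n ≥ 1, and β real with 1 + β − n < 0 and 1 + β + n > 0. Define H(c) = c^{(1+β−n)/4}·((ξ*(c))^{(1+β+n)/2}·exp(c·ξ*(c) − ξ*(c)²/σ))^{1/2} where ξ*(c) = (cσ + √(c²σ² + 4σ(1+β+n)))/4. Then H(c) → ∞ as c → 0⁺ and H(c) → ∞ as c → ∞. -/
/-!
Write `K = 1 + β + n` and `a = (1 + β - n) / 4 < 0`. The point `ξ*(c)` is the positive root of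
`2 ξ² - c σ ξ - σ K / 2 = 0`, so the exponent `c ξ* - ξ*² / σ` collapses to `c ξ* / 2 - K / 4` and
`H(c) = c ^ a · ξ*(c) ^ (K / 4) · exp (c ξ*(c) / 4 - K / 8)`. As `c → 0⁺` everything but `c ^ a`
tends to a positive constant, while `c ^ a → ∞`. As `c → ∞`, `ξ*(c) ≥ c σ / 4` eventually exceeds
`1`, so `H(c) ≥ c ^ a · exp (c / 4 - K / 8)`, and the exponential beats the power.
-/

open Real Filter Topology

namespace Multiquadric

noncomputable section

def xiStar (σ K c : ℝ) : ℝ := (c * σ + √(c ^ 2 * σ ^ 2 + 4 * σ * K)) / 4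

def mqFactor (σ K c : ℝ) : ℝ :=
  (xiStar σ K c ^ (K / 2) * exp (c * xiStar σ K c - xiStar σ K c ^ 2 / σ)) ^ (1 / 2 : ℝ)

end

variable {σ K : ℝ}

theorem continuous_xiStar : Continuous (xiStar σ K) := by
  unfold xiStar
  fun_prop

theorem mul_le_xiStar (c : ℝ) : c * σ / 4 ≤ xiStar σ K c := by
  unfold xiStar
  linarith [sqrt_nonneg (c ^ 2 * σ ^ 2 + 4 * σ * K)]

theorem xiStar_pos (hσ : 0 < σ) (hK : 0 < K) (c : ℝ) : 0 < xiStar σ K c := by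
  have h : |c * σ| < √(c ^ 2 * σ ^ 2 + 4 * σ * K) := by
    rw [lt_sqrt (abs_nonneg _), sq_abs]
    nlinarith [mul_pos hσ hK]
  unfold xiStar
  linarith [neg_abs_le (c * σ)]

theorem tendsto_xiStar_atTop (hσ : 0 < σ) : Tendsto (xiStar σ K) atTop atTop :=
  tendsto_atTop_mono mul_le_xiStar <|
    (tendsto_id.atTop_mul_const hσ).atTop_div_const (by norm_num)

theorem mul_xiStar_sub_sq_div (hσ : σ ≠ 0) {c : ℝ} (hD : 0 ≤ c ^ 2 * σ ^ 2 + 4 * σ * K) :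
    c * xiStar σ K c - xiStar σ K c ^ 2 / σ = c * xiStar σ K c / 2 - K / 4 := by
  have hs := sq_sqrt hD
  unfold xiStar
  generalize √(c ^ 2 * σ ^ 2 + 4 * σ * K) = s at hs ⊢
  field_simp
  linear_combination (-2) * hs

theorem mqFactor_eq (hσ : 0 < σ) (hK : 0 < K) (c : ℝ) :
    mqFactor σ K c = xiStar σ K c ^ (K / 4) * exp (c * xiStar σ K c / 4 - K / 8) := by
  have hξ := (xiStar_pos hσ hK c).le
  rw [mqFactor, mul_xiStar_sub_sq_div hσ.ne' (by positivity),
    mul_rpow (rpow_nonneg hξ _) (exp_pos _).le, ← rpow_mul hξ, ← exp_mul]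
  ring_nf

theorem continuous_mqFactor (hK : 0 ≤ K) : Continuous (mqFactor σ K) := by
  unfold mqFactor
  have hξ := continuous_xiStar (σ := σ) (K := K)
  refine (((hξ.rpow_const fun _ => Or.inr (by linarith)).mul ?_).rpow_const
    fun _ => Or.inr (by norm_num))
  fun_prop

theorem mqFactor_pos (hσ : 0 < σ) (hK : 0 < K) (c : ℝ) : 0 < mqFactor σ K c := by
  have := xiStar_pos hσ hK c
  rw [mqFactor_eq hσ hK]
  positivity

theorem exp_le_mqFactor (hσ : 0 < σ) (hK : 0 < K) {c : ℝ} (hc : 0 ≤ c)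
    (hξ : 1 ≤ xiStar σ K c) : exp (c / 4 - K / 8) ≤ mqFactor σ K c := by
  rw [mqFactor_eq hσ hK]
  calc exp (c / 4 - K / 8) ≤ exp (c * xiStar σ K c / 4 - K / 8) := by
        gcongr
        nlinarith
    _ ≤ xiStar σ K c ^ (K / 4) * exp (c * xiStar σ K c / 4 - K / 8) :=
        le_mul_of_one_le_left (exp_pos _).le (one_le_rpow hξ (by positivity))

theorem tendsto_rpow_mul_exp_atTop (a : ℝ) {b : ℝ} (hb : 0 < b) :
    Tendsto (fun c : ℝ => c ^ a * exp (b * c)) atTop atTop := by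
  refine (tendsto_exp_mul_div_rpow_atTop (-a) b hb).congr' ?_
  filter_upwards [eventually_ge_atTop 0] with c hc
  rw [rpow_neg hc, div_inv_eq_mul, mul_comm]

end Multiquadric

open Multiquadric in
theorem stmt_13_general (n : ℕ) (σ β : ℝ) (hσ : 0 < σ)
    (hlt : 1 + β - (n : ℝ) < 0) (hgt : 0 < 1 + β + (n : ℝ))
    (ξstar : ℝ → ℝ)
    (hξ : ∀ c : ℝ, ξstar c =
      (c * σ + Real.sqrt (c ^ 2 * σ ^ 2 + 4 * σ * (1 + β + (n : ℝ)))) / 4)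
    (H : ℝ → ℝ)
    (hH : ∀ c : ℝ, H c =
      c ^ ((1 + β - (n : ℝ)) / 4) *
        ((ξstar c) ^ ((1 + β + (n : ℝ)) / 2) *
          Real.exp (c * ξstar c - (ξstar c) ^ 2 / σ)) ^ ((1 : ℝ) / 2)) :
    Tendsto H (nhdsWithin 0 (Set.Ioi 0)) atTop ∧ Tendsto H atTop atTop := by
  obtain rfl : ξstar = xiStar σ (1 + β + n) := funext hξ
  obtain rfl : H = fun c => c ^ ((1 + β - n) / 4) * mqFactor σ (1 + β + n) c := funext hH
  have ha : (1 + β - n) / 4 < 0 := by linarith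
  constructor
  · exact (tendsto_rpow_neg_nhdsGT_zero ha).atTop_mul_pos (mqFactor_pos hσ hgt 0)
      ((continuous_mqFactor hgt.le).tendsto 0 |>.mono_left nhdsWithin_le_nhds)
  · refine tendsto_atTop_mono' _ ?_ <| (tendsto_rpow_mul_exp_atTop ((1 + β - n) / 4)
      (by norm_num : (0 : ℝ) < 1 / 4)).atTop_div_const (exp_pos ((1 + β + n) / 8))
    filter_upwards [eventually_ge_atTop 0, (tendsto_xiStar_atTop hσ).eventually_ge_atTop 1]
      with c hc hξ1
    calc c ^ ((1 + β - n) / 4) * exp (1 / 4 * c) / exp ((1 + β + n) / 8)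
        = c ^ ((1 + β - n) / 4) * exp (c / 4 - (1 + β + n) / 8) := by
          rw [mul_div_assoc, ← exp_sub, one_div_mul_eq_div]
      _ ≤ _ := by gcongr; exact exp_le_mqFactor hσ hgt hc hξ1

theorem stmt_13 (n : ℕ) (hn : 1 ≤ n) (σ β : ℝ) (hσ : 0 < σ)
    (hlt : 1 + β - (n : ℝ) < 0) (hgt : 0 < 1 + β + (n : ℝ))
    (ξstar : ℝ → ℝ)
    (hξ : ∀ c : ℝ, ξstar c =
      (c * σ + Real.sqrt (c ^ 2 * σ ^ 2 + 4 * σ * (1 + β + (n : ℝ)))) / 4)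
    (H : ℝ → ℝ)
    (hH : ∀ c : ℝ, H c =
      c ^ ((1 + β - (n : ℝ)) / 4) *
        ((ξstar c) ^ ((1 + β + (n : ℝ)) / 2) *
          Real.exp (c * ξstar c - (ξstar c) ^ 2 / σ)) ^ ((1 : ℝ) / 2)) :
    Tendsto H (nhdsWithin 0 (Set.Ioi 0)) atTop ∧ Tendsto H atTop atTop :=
  stmt_13_general n σ β hσ hlt hgt ξstar hξ H hH
end
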